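/- Let Ω ⊂ ℂ² be a bounded convex domain and let f, g : 𝔻 → ∂Ω be non-constant holomorphic maps, continuous on closure(𝔻), each contained in a complex line: f(𝔻) ⊂ L₁ and g(𝔻) ⊂ L₂ where L₁, L₂ are complex affine lines with L₁ ∩ Ω = ∅ and L₂ ∩ Ω = ∅. If closure(f(𝔻)) ∩ closure(g(𝔻)) ≠ ∅ and ∂Ω has a unique supporting real hyperplane at each point of L₁ ∩ ∂Ω and L₂ ∩ ∂Ω (smoothness of the boundary), then L₁ = L₂. -/

import Mathlib

/-!
Separating `Ω` from each line `Lᵢ` (Hahn–Banach) gives a supporting functional `ℓᵢ` of `Ω` at a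
common point `p` of the closures of the two disks; `p` lies on both lines and on `∂Ω`. Being
bounded below on `Lᵢ`, the real functional `ℓᵢ` vanishes on the complex direction of `Lᵢ`. By
smoothness `ℓ₁ = ℓ₂`, and a nonzero real functional on `ℂ²` cannot vanish on two independent
complex directions, so the directions are proportional: the lines are parallel and meet at `p`.
-/

open Metric

/-- A complex affine line in ℂ². -/
def complexLine (a b c d : ℂ) : Set (ℂ × ℂ) :=
  {p | ∃ ζ : ℂ, p = (a * ζ + b, c * ζ + d)}

/-- `ℓ` is a (unit, real) supporting functional for `Ω` at the boundary point `p`. -/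
def IsSupportingFunctional (Ω : Set (ℂ × ℂ)) (p : ℂ × ℂ) (ℓ : (ℂ × ℂ) →L[ℝ] ℝ) : Prop :=
  ‖ℓ‖ = 1 ∧ ∀ z ∈ Ω, ℓ z ≤ ℓ p

open scoped Pointwise

theorem LinearMap.map_eq_zero_of_bddBelow_range_add_smul {𝕜 E : Type*} [Field 𝕜] [LinearOrder 𝕜]
    [IsStrictOrderedRing 𝕜] [AddCommGroup E] [Module 𝕜 E] (ℓ : E →ₗ[𝕜] 𝕜) {p v : E}
    (h : BddBelow (Set.range fun t : 𝕜 => ℓ (p + t • v))) : ℓ v = 0 := by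
  by_contra hv
  obtain ⟨u, hu⟩ := h
  have := hu ⟨(u - ℓ p - 1) / ℓ v, rfl⟩
  simp only [map_add, map_smul, smul_eq_mul, div_mul_cancel₀ _ hv] at this
  linarith

theorem complexLine_eq_vadd_span (a b c d : ℂ) :
    complexLine a b c d = (b, d) +ᵥ ((ℂ ∙ (a, c) : Submodule ℂ (ℂ × ℂ)) : Set (ℂ × ℂ)) := by
  ext q
  simp only [complexLine, Set.mem_vadd_set, SetLike.mem_coe,
    Submodule.mem_span_singleton, vadd_eq_add]
  constructor
  · rintro ⟨ζ, rfl⟩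
    exact ⟨ζ • (a, c), ⟨ζ, rfl⟩, by simp [mul_comm, add_comm]⟩
  · rintro ⟨_, ⟨ζ, rfl⟩, rfl⟩
    exact ⟨ζ, by simp [mul_comm, add_comm]⟩

theorem isClosed_complexLine (a b c d : ℂ) : IsClosed (complexLine a b c d) := by
  rw [complexLine_eq_vadd_span]
  exact (Submodule.closed_of_finiteDimensional (ℂ ∙ (a, c))).vadd _

theorem convex_complexLine (a b c d : ℂ) : Convex ℝ (complexLine a b c d) := by
  rw [complexLine_eq_vadd_span]
  exact ((ℂ ∙ (a, c)).restrictScalars ℝ).convex.vadd _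

theorem add_mem_complexLine {a b c d : ℂ} {p : ℂ × ℂ} (hp : p ∈ complexLine a b c d) (ζ : ℂ) :
    p + (a * ζ, c * ζ) ∈ complexLine a b c d := by
  obtain ⟨ζ₀, rfl⟩ := hp
  exact ⟨ζ₀ + ζ, by simp only [Prod.mk_add_mk, Prod.ext_iff]; constructor <;> ring⟩

theorem complexLine_eq_of_mem {a b c d : ℂ} {p : ℂ × ℂ} (hp : p ∈ complexLine a b c d) :
    complexLine a b c d = complexLine a p.1 c p.2 := by
  obtain ⟨ζ₀, rfl⟩ := hp
  ext q
  constructor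
  · rintro ⟨ζ, rfl⟩
    exact ⟨ζ - ζ₀, by simp only [Prod.ext_iff]; constructor <;> ring⟩
  · rintro ⟨ζ, rfl⟩
    exact ⟨ζ + ζ₀, by simp only [Prod.ext_iff]; constructor <;> ring⟩

theorem complexLine_mul_left {μ : ℂ} (hμ : μ ≠ 0) (a b c d : ℂ) :
    complexLine (μ * a) b (μ * c) d = complexLine a b c d := by
  ext q
  constructor
  · rintro ⟨ζ, rfl⟩
    exact ⟨μ * ζ, by simp only [Prod.ext_iff]; constructor <;> ring⟩
  · rintro ⟨ζ, rfl⟩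
    exact ⟨ζ / μ, by simp only [Prod.ext_iff]; constructor <;> field_simp⟩

theorem exists_ne_zero_eq_mul_of_det_eq_zero {a₁ c₁ a₂ c₂ : ℂ} (h₁ : (a₁, c₁) ≠ (0, 0))
    (h₂ : (a₂, c₂) ≠ (0, 0)) (hdet : a₁ * c₂ - a₂ * c₁ = 0) :
    ∃ μ ≠ 0, a₂ = μ * a₁ ∧ c₂ = μ * c₁ := by
  rcases eq_or_ne a₁ 0 with ha₁ | ha₁
  · have hc₁ : c₁ ≠ 0 := fun hc₁ => h₁ (by simp [ha₁, hc₁])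
    have ha₂ : a₂ = 0 := by simpa [ha₁, hc₁] using hdet
    have hc₂ : c₂ ≠ 0 := fun hc₂ => h₂ (by simp [ha₂, hc₂])
    exact ⟨c₂ / c₁, div_ne_zero hc₂ hc₁, by simp [ha₁, ha₂], by field_simp⟩
  · have hc₂ : c₂ = a₂ / a₁ * c₁ := by field_simp; linear_combination hdet
    have ha₂ : a₂ ≠ 0 := fun ha₂ => h₂ (by simp [ha₂, hc₂])
    exact ⟨a₂ / a₁, div_ne_zero ha₂ ha₁, by field_simp, hc₂⟩

theorem complexLine_eq_of_det_eq_zero {a₁ b₁ c₁ d₁ a₂ b₂ c₂ d₂ : ℂ} {p : ℂ × ℂ}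
    (h₁ : (a₁, c₁) ≠ (0, 0)) (h₂ : (a₂, c₂) ≠ (0, 0)) (hdet : a₁ * c₂ - a₂ * c₁ = 0)
    (hp₁ : p ∈ complexLine a₁ b₁ c₁ d₁) (hp₂ : p ∈ complexLine a₂ b₂ c₂ d₂) :
    complexLine a₁ b₁ c₁ d₁ = complexLine a₂ b₂ c₂ d₂ := by
  obtain ⟨μ, hμ, rfl, rfl⟩ := exists_ne_zero_eq_mul_of_det_eq_zero h₁ h₂ hdet
  rw [complexLine_eq_of_mem hp₁, complexLine_eq_of_mem hp₂, complexLine_mul_left hμ]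

theorem ContinuousLinearMap.eq_zero_of_map_mul_eq_zero_of_det_ne_zero {M : Type*}
    [AddCommGroup M] [Module ℝ M] [TopologicalSpace M] {a₁ c₁ a₂ c₂ : ℂ}
    (ℓ : ℂ × ℂ →L[ℝ] M) (hdet : a₁ * c₂ - a₂ * c₁ ≠ 0)
    (h₁ : ∀ ζ : ℂ, ℓ (a₁ * ζ, c₁ * ζ) = 0) (h₂ : ∀ ζ : ℂ, ℓ (a₂ * ζ, c₂ * ζ) = 0) : ℓ = 0 := by
  refine ContinuousLinearMap.ext fun w => ?_
  set D := a₁ * c₂ - a₂ * c₁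
  -- Cramer's rule writes `w` in the basis `(a₁, c₁)`, `(a₂, c₂)` of `ℂ²`.
  have hw : w = (a₁ * ((c₂ * w.1 - a₂ * w.2) / D), c₁ * ((c₂ * w.1 - a₂ * w.2) / D))
      + (a₂ * ((a₁ * w.2 - c₁ * w.1) / D), c₂ * ((a₁ * w.2 - c₁ * w.1) / D)) := by
    simp only [Prod.mk_add_mk, Prod.ext_iff]
    constructor <;> (field_simp; ring)
  rw [hw, map_add, h₁, h₂, add_zero, zero_apply]

theorem IsSupportingFunctional.inv_norm_smul {Ω : Set (ℂ × ℂ)} {p : ℂ × ℂ}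
    {ℓ : ℂ × ℂ →L[ℝ] ℝ} (hℓ : ℓ ≠ 0) (hp : ∀ z ∈ Ω, ℓ z ≤ ℓ p) :
    IsSupportingFunctional Ω p (‖ℓ‖⁻¹ • ℓ) :=
  ⟨norm_smul_inv_norm hℓ, fun z hz => by
    simpa using mul_le_mul_of_nonneg_left (hp z hz) (inv_nonneg.2 (norm_nonneg ℓ))⟩

theorem exists_isSupportingFunctional_of_complexLine {Ω : Set (ℂ × ℂ)} (hΩo : IsOpen Ω)
    (hΩc : Convex ℝ Ω) (hΩne : Ω.Nonempty) {a b c d : ℂ} (hL : complexLine a b c d ∩ Ω = ∅)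
    {p : ℂ × ℂ} (hp : p ∈ complexLine a b c d) :
    ∃ ℓ, IsSupportingFunctional Ω p ℓ ∧ ∀ ζ : ℂ, ℓ (a * ζ, c * ζ) = 0 := by
  obtain ⟨ℓ, u, hΩu, huL⟩ := geometric_hahn_banach_open hΩc hΩo (convex_complexLine a b c d)
    (Set.disjoint_iff_inter_eq_empty.2 (by rwa [Set.inter_comm]))
  have hdir : ∀ ζ : ℂ, ℓ (a * ζ, c * ζ) = 0 := fun ζ =>
    (ℓ : ℂ × ℂ →ₗ[ℝ] ℝ).map_eq_zero_of_bddBelow_range_add_smul (p := p) ⟨u, by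
      rintro _ ⟨t, rfl⟩
      simpa [Complex.real_smul, mul_left_comm] using huL _ (add_mem_complexLine hp (t * ζ))⟩
  have hℓ : ℓ ≠ 0 := by
    rintro rfl
    obtain ⟨z, hz⟩ := hΩne
    exact lt_irrefl _ ((hΩu z hz).trans_le (huL p hp))
  exact ⟨_, .inv_norm_smul hℓ fun z hz => ((hΩu z hz).trans_le (huL p hp)).le,
    fun ζ => by simp [hdir ζ]⟩

theorem stmt5_general (Ω : Set (ℂ × ℂ)) (hΩo : IsOpen Ω)
    (hΩc : Convex ℝ Ω)
    (f g : ℂ → ℂ × ℂ)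
    (hfb : ∀ ζ ∈ ball (0 : ℂ) 1, f ζ ∈ frontier Ω)
    (a₁ b₁ c₁ d₁ a₂ b₂ c₂ d₂ : ℂ)
    (hL₁ne : (a₁, c₁) ≠ (0, 0)) (hL₂ne : (a₂, c₂) ≠ (0, 0))
    (hfL : f '' ball (0 : ℂ) 1 ⊆ complexLine a₁ b₁ c₁ d₁)
    (hgL : g '' ball (0 : ℂ) 1 ⊆ complexLine a₂ b₂ c₂ d₂)
    (hL₁Ω : complexLine a₁ b₁ c₁ d₁ ∩ Ω = ∅)
    (hL₂Ω : complexLine a₂ b₂ c₂ d₂ ∩ Ω = ∅)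
    (hmeet : (closure (f '' ball (0 : ℂ) 1) ∩ closure (g '' ball (0 : ℂ) 1)).Nonempty)
    (hsmooth : ∀ p ∈ frontier Ω,
      (p ∈ complexLine a₁ b₁ c₁ d₁ ∨ p ∈ complexLine a₂ b₂ c₂ d₂) →
      (∃ ℓ, IsSupportingFunctional Ω p ℓ) ∧
        ∀ ℓ₁ ℓ₂, IsSupportingFunctional Ω p ℓ₁ → IsSupportingFunctional Ω p ℓ₂ →
          ℓ₁ = ℓ₂) :
    complexLine a₁ b₁ c₁ d₁ = complexLine a₂ b₂ c₂ d₂ := by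
  obtain ⟨p, hpf, hpg⟩ := hmeet
  have hpL₁ : p ∈ complexLine a₁ b₁ c₁ d₁ := closure_minimal hfL (isClosed_complexLine ..) hpf
  have hpL₂ : p ∈ complexLine a₂ b₂ c₂ d₂ := closure_minimal hgL (isClosed_complexLine ..) hpg
  have hpΩ : p ∈ frontier Ω := closure_minimal (Set.image_subset_iff.2 hfb) isClosed_frontier hpf
  have hΩne : Ω.Nonempty := closure_nonempty_iff.1 ⟨p, frontier_subset_closure hpΩ⟩
  obtain ⟨ℓ, hℓ, hdir₁⟩ := exists_isSupportingFunctional_of_complexLine hΩo hΩc hΩne hL₁Ω hpL₁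
  obtain ⟨ℓ₂, hℓ₂, hdir₂⟩ := exists_isSupportingFunctional_of_complexLine hΩo hΩc hΩne hL₂Ω hpL₂
  obtain rfl := (hsmooth p hpΩ (.inl hpL₁)).2 ℓ ℓ₂ hℓ hℓ₂
  refine complexLine_eq_of_det_eq_zero hL₁ne hL₂ne (by_contra fun hdet => ?_) hpL₁ hpL₂
  have hℓ0 := ℓ.eq_zero_of_map_mul_eq_zero_of_det_ne_zero hdet hdir₁ hdir₂
  simpa [hℓ0] using hℓ.1

/-- Two analytic disks in the boundary of a smooth bounded convex
domain in ℂ², each contained in a complex line disjoint from Ω, whose closures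
intersect, lie in the same complex line. -/
theorem stmt5 (Ω : Set (ℂ × ℂ)) (hΩo : IsOpen Ω) (hΩb : Bornology.IsBounded Ω)
    (hΩc : Convex ℝ Ω) (hΩne : Ω.Nonempty)
    (f g : ℂ → ℂ × ℂ)
    (hfh : DifferentiableOn ℂ f (ball (0 : ℂ) 1))
    (hgh : DifferentiableOn ℂ g (ball (0 : ℂ) 1))
    (hfc : ContinuousOn f (closedBall (0 : ℂ) 1))
    (hgc : ContinuousOn g (closedBall (0 : ℂ) 1))
    (hfb : ∀ ζ ∈ ball (0 : ℂ) 1, f ζ ∈ frontier Ω)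
    (hgb : ∀ ζ ∈ ball (0 : ℂ) 1, g ζ ∈ frontier Ω)
    (hfnc : ∃ ζ₁ ∈ ball (0 : ℂ) 1, ∃ ζ₂ ∈ ball (0 : ℂ) 1, f ζ₁ ≠ f ζ₂)
    (hgnc : ∃ ζ₁ ∈ ball (0 : ℂ) 1, ∃ ζ₂ ∈ ball (0 : ℂ) 1, g ζ₁ ≠ g ζ₂)
    (a₁ b₁ c₁ d₁ a₂ b₂ c₂ d₂ : ℂ)
    (hL₁ne : (a₁, c₁) ≠ (0, 0)) (hL₂ne : (a₂, c₂) ≠ (0, 0))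
    (hfL : f '' ball (0 : ℂ) 1 ⊆ complexLine a₁ b₁ c₁ d₁)
    (hgL : g '' ball (0 : ℂ) 1 ⊆ complexLine a₂ b₂ c₂ d₂)
    (hL₁Ω : complexLine a₁ b₁ c₁ d₁ ∩ Ω = ∅)
    (hL₂Ω : complexLine a₂ b₂ c₂ d₂ ∩ Ω = ∅)
    (hmeet : (closure (f '' ball (0 : ℂ) 1) ∩ closure (g '' ball (0 : ℂ) 1)).Nonempty)
    (hsmooth : ∀ p ∈ frontier Ω,
      (p ∈ complexLine a₁ b₁ c₁ d₁ ∨ p ∈ complexLine a₂ b₂ c₂ d₂) →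
      (∃ ℓ, IsSupportingFunctional Ω p ℓ) ∧
        ∀ ℓ₁ ℓ₂, IsSupportingFunctional Ω p ℓ₁ → IsSupportingFunctional Ω p ℓ₂ →
          ℓ₁ = ℓ₂) :
    complexLine a₁ b₁ c₁ d₁ = complexLine a₂ b₂ c₂ d₂ :=
  stmt5_general Ω hΩo hΩc f g hfb a₁ b₁ c₁ d₁ a₂ b₂ c₂ d₂ hL₁ne hL₂ne hfL hgL hL₁Ω hL₂Ω hmeet
    hsmooth
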